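/- Suppose M = 4Z + 3 for some integer Z ≥ 0 and the couplings are uniform with γ_m = γ ≠ 0 and J_m = J for all edges m. Then there exists a nonzero vector Ψ ∈ W₁^↑, independent of the on-site potential, such that for every on-site potential μ : {1,…,M} → ℝ the Krylov subspace span{(H_γ + H_J + H_μ)^k Ψ : k ∈ ℕ} has dimension at most M·2^{3Z+1}. Since dim W₁^↑ = M·2^{4Z+2}, this Krylov subspace is a proper subspace of W₁^↑ for every μ; hence Hilbert space fragmentation of the Q = 1 sector survives the addition of an arbitrary random on-site potential. -/

import Mathlib

open scoped BigOperators

namespace QuantumBreakdown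

/-- Basis index: pairs of an occupation configuration and a spin configuration. -/
abbrev Cfg (M : ℕ) := (Fin M → Bool) × (Fin M → Bool)

/-- The Hilbert space `V_M`. -/
abbrev V (M : ℕ) := Cfg M → ℂ

/-- The basis vector `e_{n,s}`. -/
noncomputable def e (M : ℕ) (p : Cfg M) : V M := Pi.single p 1

/-- The linear operator determined by prescribed images of the basis vectors. -/
noncomputable def mkOp (M : ℕ) (f : Cfg M → V M) : V M →ₗ[ℂ] V M :=
  (Pi.basisFun ℂ (Cfg M)).constr ℂ f

/-- The left site of edge `m`. -/
def sL (M : ℕ) (m : Fin (M - 1)) : Fin M := ⟨m.1, by have := m.2; omega⟩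

/-- The right site of edge `m`. -/
def sR (M : ℕ) (m : Fin (M - 1)) : Fin M := ⟨m.1 + 1, by have := m.2; omega⟩

/-- Move a fermion from site `a` to site `b`. -/
def hop (M : ℕ) (n : Fin M → Bool) (a b : Fin M) : Fin M → Bool :=
  Function.update (Function.update n a false) b true

/-- The hopping term `H_γ`. -/
noncomputable def Hgam (M : ℕ) (γ : Fin (M - 1) → ℝ) : V M →ₗ[ℂ] V M :=
  mkOp M fun p =>
    -∑ m : Fin (M - 1), (γ m : ℂ) •
      ((if p.1 (sL M m) = true ∧ p.1 (sR M m) = false then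
          e M (hop M p.1 (sL M m) (sR M m), p.2) else 0)
        +
       (if p.1 (sR M m) = true ∧ p.1 (sL M m) = false then
          e M (hop M p.1 (sR M m) (sL M m), p.2) else 0))

/-- The breakdown interaction `H_J`. -/
noncomputable def HJop (M : ℕ) (J : Fin (M - 1) → ℝ) : V M →ₗ[ℂ] V M :=
  mkOp M fun p =>
    ∑ m : Fin (M - 1), (J m : ℂ) •
      ((if p.1 (sL M m) = true ∧ p.1 (sR M m) = false ∧ p.2 (sR M m) = false then
          e M (hop M p.1 (sL M m) (sR M m), Function.update p.2 (sR M m) true) else 0)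
        +
       (if p.1 (sR M m) = true ∧ p.1 (sL M m) = false ∧ p.2 (sR M m) = true then
          e M (hop M p.1 (sR M m) (sL M m), Function.update p.2 (sR M m) false) else 0))

/-- The on-site potential `H_μ`. -/
noncomputable def Hmu (M : ℕ) (μ : Fin M → ℝ) : V M →ₗ[ℂ] V M :=
  mkOp M fun p => (∑ m : Fin M, if p.1 m = true then (μ m : ℂ) else 0) • e M p

/-- Pauli `σ^x` at site `m`. -/
noncomputable def sigx (M : ℕ) (m : Fin M) : V M →ₗ[ℂ] V M :=
  mkOp M fun p => e M (p.1, Function.update p.2 m (!p.2 m))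

/-- Pauli `σ^y` at site `m`. -/
noncomputable def sigy (M : ℕ) (m : Fin M) : V M →ₗ[ℂ] V M :=
  mkOp M fun p =>
    (if p.2 m = true then Complex.I else -Complex.I) • e M (p.1, Function.update p.2 m (!p.2 m))

/-- Pauli `σ^z` at site `m`. -/
noncomputable def sigz (M : ℕ) (m : Fin M) : V M →ₗ[ℂ] V M :=
  mkOp M fun p => (if p.2 m = true then (1 : ℂ) else -1) • e M p

/-- The magnetic field term `H_h`. -/
noncomputable def Hh (M : ℕ) (hx hy hz : Fin M → ℝ) : V M →ₗ[ℂ] V M :=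
  ∑ m : Fin M, ((hx m : ℂ) • sigx M m + (hy m : ℂ) • sigy M m + (hz m : ℂ) • sigz M m)

/-- Number of occupied sites of an occupation configuration. -/
def nOcc (M : ℕ) (n : Fin M → Bool) : ℕ := (Finset.univ.filter fun m => n m = true).card

/-- The number operator `N`. -/
noncomputable def numOp (M : ℕ) : V M →ₗ[ℂ] V M :=
  mkOp M fun p => (nOcc M p.1 : ℂ) • e M p

/-- The charge-`Q` sector `W_Q`. -/
noncomputable def sector (M Q : ℕ) : Submodule ℂ (V M) :=
  Submodule.span ℂ { v | ∃ p : Cfg M, nOcc M p.1 = Q ∧ v = e M p }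

/-- The charge-`Q` sector with first spin up, `W_Q^↑`. -/
noncomputable def sectorUp (M : ℕ) (hM : 0 < M) (Q : ℕ) : Submodule ℂ (V M) :=
  Submodule.span ℂ { v | ∃ p : Cfg M, nOcc M p.1 = Q ∧ p.2 ⟨0, hM⟩ = true ∧ v = e M p }

end QuantumBreakdown

open QuantumBreakdown

/-!
In the one-particle sector let `w_x` be the state with the particle at site `x`, spin up at the
first site (index `0` here), a one-site spin state `u` at every other site `≤ x` and `v` at every
site `> x`. A hop from `x` to `x + 1` acts only on the spin at `x + 1`, by `A = -γ + J σ⁺`, and a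
hop from `x` to `x - 1` only on the spin at `x`, by `B = -γ + J σ⁻`; the first spin is never
touched. If `v` is an eigenvector of `B A` with eigenvalue `κ` (one exists over `ℂ`, whatever `γ`
and `J`) and `u = A v`, the hopping terms therefore map `w_x` to `w_{x+1} + κ w_{x-1}`, while the
potential is diagonal on each `w_x`. So the span of the `w_x` is invariant for every on-site
potential and contains the Krylov space of `w_0`; its dimension is at most `M`, far below
`dim W₁^↑ = M 2^{M-1}`.
-/

namespace QuantumBreakdown

section ProductStates

variable {ι R σ : Type*} [Fintype ι] [CommSemiring R]

def siteProd (φ : ι → σ → R) (s : ι → σ) : R := ∏ j, φ j (s j)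

lemma siteProd_ne_zero [Nontrivial R] [NoZeroDivisors R] {φ : ι → σ → R}
    (hφ : ∀ j, φ j ≠ 0) : siteProd φ ≠ 0 := by
  choose s hs using fun j => Function.ne_iff.mp (hφ j)
  exact Function.ne_iff.mpr ⟨s, Finset.prod_ne_zero_iff.mpr fun j _ => hs j⟩

variable [DecidableEq ι]

def onSite (k : ι) (T : Module.End R (σ → R)) (c : (ι → σ) → R) : (ι → σ) → R :=
  fun s => T (fun b => c (Function.update s k b)) (s k)

lemma siteProd_update_apply (φ : ι → σ → R) (k : ι) (ψ : σ → R) (s : ι → σ) :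
    siteProd (Function.update φ k ψ) s =
      ψ (s k) * ∏ j ∈ Finset.univ.erase k, φ j (s j) := by
  rw [siteProd, ← Finset.mul_prod_erase _ _ (Finset.mem_univ k), Function.update_self]
  congr 1
  exact Finset.prod_congr rfl fun j hj => by
    rw [Function.update_of_ne (Finset.ne_of_mem_erase hj)]

lemma siteProd_apply_update (φ : ι → σ → R) (k : ι) (s : ι → σ) (b : σ) :
    siteProd φ (Function.update s k b) = φ k b * ∏ j ∈ Finset.univ.erase k, φ j (s j) := by
  rw [siteProd, ← Finset.mul_prod_erase _ _ (Finset.mem_univ k), Function.update_self]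
  congr 1
  exact Finset.prod_congr rfl fun j hj => by
    rw [Function.update_of_ne (Finset.ne_of_mem_erase hj)]

lemma onSite_siteProd (k : ι) (T : Module.End R (σ → R)) (φ : ι → σ → R) :
    onSite k T (siteProd φ) = siteProd (Function.update φ k (T (φ k))) := by
  funext s
  have hslice : (fun b => siteProd φ (Function.update s k b)) =
      (∏ j ∈ Finset.univ.erase k, φ j (s j)) • φ k := by
    funext b
    rw [siteProd_apply_update, Pi.smul_apply, smul_eq_mul, mul_comm]
  rw [onSite, hslice, map_smul, siteProd_update_apply, Pi.smul_apply, smul_eq_mul, mul_comm]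

lemma siteProd_update_smul (φ : ι → σ → R) (k : ι) (a : R) (ψ : σ → R) :
    siteProd (Function.update φ k (a • ψ)) = a • siteProd (Function.update φ k ψ) := by
  funext s
  simp only [siteProd_update_apply, Pi.smul_apply, smul_eq_mul, mul_assoc]

lemma sum_smul_ite_update {X : Type*} [AddCommMonoid X] [Module R X] (k : ι) (b : Bool)
    (c : (ι → Bool) → R) (v : (ι → Bool) → X) :
    ∑ s, c s • (if s k = !b then v (Function.update s k b) else 0) =
      ∑ s, (if s k = b then c (Function.update s k (!b)) • v s else 0) := by
  have hflip : Function.Involutive fun s : ι → Bool => Function.update s k (!s k) := fun s => by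
    funext j
    rcases eq_or_ne j k with rfl | hj <;> simp [Function.update_of_ne, *]
  refine Fintype.sum_bijective _ hflip.bijective _ _ fun s => ?_
  rcases hs : s k <;> cases b <;> simp [← hs] <;> simp [hs]

end ProductStates

section OneParticle

variable {M : ℕ}

def occAt (x : Fin M) : Fin M → Bool := fun j => decide (j = x)

lemma nOcc_occAt (x : Fin M) : nOcc M (occAt x) = 1 := by
  rw [nOcc, Finset.card_eq_one]
  exact ⟨x, by ext j; simp [occAt]⟩

lemma occAt_injective : Function.Injective (occAt (M := M)) := fun x y h => by
  simpa [occAt] using congrFun h x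

lemma hop_occAt {x y : Fin M} (h : x ≠ y) : hop M (occAt x) x y = occAt y := by
  funext j
  rcases eq_or_ne j y with rfl | hy
  · simp [hop, occAt]
  · rcases eq_or_ne j x with rfl | hx <;> simp [hop, occAt, Function.update_of_ne, *]

lemma mkOp_apply_e (f : Cfg M → V M) (p : Cfg M) : mkOp M f (e M p) = f p := by
  rw [mkOp, e, ← Pi.basisFun_apply ℂ, Module.Basis.constr_basis]

noncomputable def particleAt (x : Fin M) : ((Fin M → Bool) → ℂ) →ₗ[ℂ] V M :=
  Fintype.linearCombination ℂ fun s => e M (occAt x, s)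

lemma particleAt_apply (x : Fin M) (c : (Fin M → Bool) → ℂ) :
    particleAt x c = ∑ s, c s • e M (occAt x, s) :=
  Fintype.linearCombination_apply ℂ _ c

lemma particleAt_apply_occAt (x : Fin M) (c : (Fin M → Bool) → ℂ) (s : Fin M → Bool) :
    particleAt x c (occAt x, s) = c s := by
  simp [particleAt_apply, e, Pi.single_apply]

lemma particleAt_mem_sectorUp (hM : 0 < M) (x : Fin M) {c : (Fin M → Bool) → ℂ}
    (hc : ∀ s, s ⟨0, hM⟩ = false → c s = 0) : particleAt x c ∈ sectorUp M hM 1 := by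
  rw [particleAt_apply]
  refine Submodule.sum_mem _ fun s _ => ?_
  rcases hs : s ⟨0, hM⟩
  · rw [hc s hs, zero_smul]
    exact Submodule.zero_mem _
  · exact Submodule.smul_mem _ _ (Submodule.subset_span ⟨(occAt x, s), nOcc_occAt x, hs, rfl⟩)

lemma Hmu_particleAt (μ : Fin M → ℝ) (x : Fin M) (c : (Fin M → Bool) → ℂ) :
    Hmu M μ (particleAt x c) = (μ x : ℂ) • particleAt x c := by
  rw [particleAt_apply, map_sum, Finset.smul_sum]
  refine Finset.sum_congr rfl fun s _ => ?_
  rw [map_smul, Hmu, mkOp_apply_e, smul_comm]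
  simp [occAt]

end OneParticle

section Edges

variable {M : ℕ}

noncomputable def edgeHam (γ J : ℝ) (m : Fin (M - 1)) : V M →ₗ[ℂ] V M :=
  mkOp M fun p =>
    -((γ : ℂ) •
      ((if p.1 (sL M m) = true ∧ p.1 (sR M m) = false then
          e M (hop M p.1 (sL M m) (sR M m), p.2) else 0)
        +
       (if p.1 (sR M m) = true ∧ p.1 (sL M m) = false then
          e M (hop M p.1 (sR M m) (sL M m), p.2) else 0)))
    + (J : ℂ) •
      ((if p.1 (sL M m) = true ∧ p.1 (sR M m) = false ∧ p.2 (sR M m) = false then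
          e M (hop M p.1 (sL M m) (sR M m), Function.update p.2 (sR M m) true) else 0)
        +
       (if p.1 (sR M m) = true ∧ p.1 (sL M m) = false ∧ p.2 (sR M m) = true then
          e M (hop M p.1 (sR M m) (sL M m), Function.update p.2 (sR M m) false) else 0))

lemma Hgam_add_HJop (γ J : Fin (M - 1) → ℝ) :
    Hgam M γ + HJop M J = ∑ m, edgeHam (γ m) (J m) m := by
  simp only [Hgam, HJop, edgeHam, mkOp, ← map_add, ← map_sum]
  congr 1
  funext p
  simp only [Pi.add_apply, Finset.sum_apply, Finset.sum_add_distrib, Finset.sum_neg_distrib]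

lemma sL_ne_sR (m : Fin (M - 1)) : sL M m ≠ sR M m := by
  simp [sL, sR, Fin.ext_iff]

lemma edgeHam_e_occAt (γ J : ℝ) (m : Fin (M - 1)) (x : Fin M) (s : Fin M → Bool) :
    edgeHam γ J m (e M (occAt x, s)) =
      (if x = sL M m then
        -((γ : ℂ) • e M (occAt (sR M m), s)) +
          if s (sR M m) = false then
            (J : ℂ) • e M (occAt (sR M m), Function.update s (sR M m) true) else 0
      else 0) +
      (if x = sR M m then
        -((γ : ℂ) • e M (occAt (sL M m), s)) +
          if s (sR M m) = true then
            (J : ℂ) • e M (occAt (sL M m), Function.update s (sR M m) false) else 0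
      else 0) := by
  have hLR := sL_ne_sR m
  rw [edgeHam, mkOp_apply_e]
  by_cases hL : x = sL M m
  · subst hL
    simp [occAt, hop_occAt hLR, hLR, hLR.symm]
  by_cases hR : x = sR M m
  · subst hR
    simp [occAt, hop_occAt hLR.symm, hLR, hLR.symm]
  · simp [occAt, hL, hR, Ne.symm hL, Ne.symm hR]

-- A one-site spin state is its amplitude function `Bool → ℂ`, with `true` for spin up.
def spinRaise : Module.End ℂ (Bool → ℂ) where
  toFun ψ b := if b = true then ψ false else 0
  map_add' _ _ := by funext b; cases b <;> simp
  map_smul' _ _ := by funext b; cases b <;> simp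

def spinLower : Module.End ℂ (Bool → ℂ) where
  toFun ψ b := if b = false then ψ true else 0
  map_add' _ _ := by funext b; cases b <;> simp
  map_smul' _ _ := by funext b; cases b <;> simp

noncomputable def hopRightSpin (γ J : ℝ) : Module.End ℂ (Bool → ℂ) :=
  -(γ : ℂ) • 1 + (J : ℂ) • spinRaise

noncomputable def hopLeftSpin (γ J : ℝ) : Module.End ℂ (Bool → ℂ) :=
  -(γ : ℂ) • 1 + (J : ℂ) • spinLower

lemma onSite_hopRightSpin_apply (γ J : ℝ) (k : Fin M) (c : (Fin M → Bool) → ℂ)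
    (s : Fin M → Bool) :
    onSite k (hopRightSpin γ J) c s =
      -(γ : ℂ) * c s + if s k = true then (J : ℂ) * c (Function.update s k false) else 0 := by
  simp [onSite, hopRightSpin, spinRaise]

lemma onSite_hopLeftSpin_apply (γ J : ℝ) (k : Fin M) (c : (Fin M → Bool) → ℂ)
    (s : Fin M → Bool) :
    onSite k (hopLeftSpin γ J) c s =
      -(γ : ℂ) * c s + if s k = false then (J : ℂ) * c (Function.update s k true) else 0 := by
  simp [onSite, hopLeftSpin, spinLower]

lemma edgeHam_particleAt (γ J : ℝ) (m : Fin (M - 1)) (x : Fin M)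
    (c : (Fin M → Bool) → ℂ) :
    edgeHam γ J m (particleAt x c) =
      (if x = sL M m then particleAt (sR M m) (onSite (sR M m) (hopRightSpin γ J) c) else 0) +
      (if x = sR M m then particleAt (sL M m) (onSite (sR M m) (hopLeftSpin γ J) c) else 0) := by
  have hLR := sL_ne_sR m
  simp only [particleAt_apply, map_sum, map_smul, edgeHam_e_occAt]
  by_cases hL : x = sL M m
  · subst hL
    have hflip := sum_smul_ite_update (sR M m) true c
      fun t => (J : ℂ) • e M (occAt (sR M m), t)
    simp only [Bool.not_true] at hflip
    simp only [if_true, hLR, if_false, add_zero, smul_add, Finset.sum_add_distrib]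
    rw [hflip, ← Finset.sum_add_distrib]
    refine Finset.sum_congr rfl fun s _ => ?_
    rw [onSite_hopRightSpin_apply]
    split_ifs <;> module
  by_cases hR : x = sR M m
  · subst hR
    have hflip := sum_smul_ite_update (sR M m) false c
      fun t => (J : ℂ) • e M (occAt (sL M m), t)
    simp only [Bool.not_false] at hflip
    simp only [if_true, hLR.symm, if_false, zero_add, smul_add, Finset.sum_add_distrib]
    rw [hflip, ← Finset.sum_add_distrib]
    refine Finset.sum_congr rfl fun s _ => ?_
    rw [onSite_hopLeftSpin_apply]
    split_ifs <;> module
  · simp [hL, hR]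

end Edges

lemma span_range_pow_apply_le {K W : Type*} [CommRing K] [AddCommGroup W] [Module K W]
    {f : Module.End K W} {p : Submodule K W} (hp : ∀ w ∈ p, f w ∈ p) {w : W} (hw : w ∈ p) :
    Submodule.span K (Set.range fun k : ℕ => (f ^ k) w) ≤ p :=
  Submodule.span_le.mpr <| Set.range_subset_iff.mpr fun k =>
    Module.End.pow_apply_mem_of_forall_mem k hp w hw

section Chain

variable {M : ℕ}

def chainProfile (u v : Bool → ℂ) (x : Fin M) : Fin M → Bool → ℂ :=
  fun j => if j.1 = 0 then Pi.single true 1 else if j ≤ x then u else v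

noncomputable def chainState (u v : Bool → ℂ) (x : Fin M) : V M :=
  particleAt x (siteProd (chainProfile u v x))

variable {u v : Bool → ℂ} {L R : Fin M}

lemma chainProfile_succ (h : R.1 = L.1 + 1) : chainProfile u v L R = v := by
  simp [chainProfile, h, Fin.le_def]

lemma chainProfile_self (hR : R.1 ≠ 0) : chainProfile u v R R = u := by
  simp [chainProfile, hR]

lemma update_chainProfile_succ (h : R.1 = L.1 + 1) :
    Function.update (chainProfile u v L) R u = chainProfile u v R := by
  funext j
  rcases eq_or_ne j R with rfl | hj
  · rw [Function.update_self, chainProfile_self (by omega)]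
  · rw [Function.update_of_ne hj]
    have : j ≤ L ↔ j ≤ R := by
      rw [Fin.le_def, Fin.le_def]; have := Fin.val_ne_of_ne hj; omega
    simp only [chainProfile, this]

lemma update_chainProfile_pred (h : R.1 = L.1 + 1) :
    Function.update (chainProfile u v R) R v = chainProfile u v L := by
  have hfix := Function.update_eq_self R (chainProfile u v L)
  rw [chainProfile_succ h] at hfix
  rw [← update_chainProfile_succ h, Function.update_idem, hfix]

variable {γ J : ℝ} {κ : ℂ}

lemma edgeHam_chainState (hu : hopRightSpin γ J v = u) (hv : hopLeftSpin γ J u = κ • v)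
    (m : Fin (M - 1)) (x : Fin M) :
    edgeHam γ J m (chainState u v x) =
      (if x = sL M m then chainState u v (sR M m) else 0) +
      (if x = sR M m then κ • chainState u v (sL M m) else 0) := by
  have hLR : (sR M m).1 = (sL M m).1 + 1 := rfl
  rw [chainState, edgeHam_particleAt]
  congr 1 <;> split_ifs with hx
  · subst hx
    rw [onSite_siteProd, chainProfile_succ hLR, hu, update_chainProfile_succ hLR, chainState]
  · rfl
  · subst hx
    rw [onSite_siteProd, chainProfile_self (by omega), hv, siteProd_update_smul,
      update_chainProfile_pred hLR, map_smul, chainState]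
  · rfl

noncomputable def chainSpan (u v : Bool → ℂ) : Submodule ℂ (V M) :=
  Submodule.span ℂ (Set.range (chainState u v))

lemma chainState_mem_chainSpan (x : Fin M) : chainState u v x ∈ chainSpan u v :=
  Submodule.subset_span ⟨x, rfl⟩

lemma hamiltonian_chainState_mem (hu : hopRightSpin γ J v = u)
    (hv : hopLeftSpin γ J u = κ • v) (μ : Fin M → ℝ) (x : Fin M) :
    (Hgam M (fun _ => γ) + HJop M (fun _ => J) + Hmu M μ) (chainState u v x) ∈
      chainSpan u v := by
  rw [Hgam_add_HJop, LinearMap.add_apply, LinearMap.sum_apply, chainState,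
    Hmu_particleAt, ← chainState]
  refine Submodule.add_mem _ (Submodule.sum_mem _ fun m _ => ?_)
    (Submodule.smul_mem _ _ (chainState_mem_chainSpan x))
  rw [edgeHam_chainState hu hv]
  refine Submodule.add_mem _ ?_ ?_ <;> split_ifs
  · exact chainState_mem_chainSpan _
  · exact Submodule.zero_mem _
  · exact Submodule.smul_mem _ _ (chainState_mem_chainSpan _)
  · exact Submodule.zero_mem _

lemma hamiltonian_mapsTo_chainSpan (hu : hopRightSpin γ J v = u)
    (hv : hopLeftSpin γ J u = κ • v) (μ : Fin M → ℝ) :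
    ∀ w ∈ chainSpan u v,
      (Hgam M (fun _ => γ) + HJop M (fun _ => J) + Hmu M μ) w ∈ chainSpan u v :=
  fun _ hw => (Submodule.span_le (p := (chainSpan u v).comap _)).mpr
    (Set.range_subset_iff.mpr (hamiltonian_chainState_mem hu hv μ)) hw

lemma finrank_chainSpan_le : Module.finrank ℂ (chainSpan (M := M) u v) ≤ M :=
  (finrank_range_le_card (R := ℂ) (chainState (M := M) u v)).trans (Fintype.card_fin M).le

end Chain

section Counting

variable {M : ℕ}

lemma card_nOcc_eq_one : Fintype.card {n : Fin M → Bool // nOcc M n = 1} = M := by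
  have hbij : Function.Bijective
      fun x : Fin M => (⟨occAt x, nOcc_occAt x⟩ : {n // nOcc M n = 1}) := by
    refine ⟨fun x y h => occAt_injective (congrArg Subtype.val h), fun ⟨n, hn⟩ => ?_⟩
    obtain ⟨x, hx⟩ := Finset.card_eq_one.mp hn
    refine ⟨x, Subtype.ext (funext fun j => ?_)⟩
    have hj := congrArg (j ∈ ·) hx
    simp only [Finset.mem_filter, Finset.mem_univ, true_and, Finset.mem_singleton] at hj
    simp [occAt, ← hj]
  rw [← Fintype.card_of_bijective hbij, Fintype.card_fin]

lemma card_spin_eq_true (k : Fin M) :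
    Fintype.card {s : Fin M → Bool // s k = true} = 2 ^ (M - 1) := by
  rw [Fintype.card_subtype, ← Fintype.piFinset_univ,
    Fintype.card_filter_piFinset_const_eq_of_mem _ _ (Finset.mem_univ true), Finset.card_univ,
    Fintype.card_bool, Fintype.card_fin]

lemma finrank_sectorUp_one (hM : 0 < M) :
    Module.finrank ℂ (sectorUp M hM 1) = M * 2 ^ (M - 1) := by
  let T := {p : Cfg M // nOcc M p.1 = 1 ∧ p.2 ⟨0, hM⟩ = true}
  have hspan : sectorUp M hM 1 = Submodule.span ℂ (Set.range fun p : T => e M p) := by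
    rw [sectorUp]
    congr 1
    ext v
    exact ⟨fun ⟨p, h1, h2, hv⟩ => ⟨⟨p, h1, h2⟩, hv.symm⟩,
      fun ⟨p, hv⟩ => ⟨p, p.2.1, p.2.2, hv.symm⟩⟩
  have he : e M = ⇑(Pi.basisFun ℂ (Cfg M)) := funext fun p => (Pi.basisFun_apply ℂ _ p).symm
  have hli : LinearIndependent ℂ fun p : T => e M p := by
    rw [he]
    exact (Pi.basisFun ℂ (Cfg M)).linearIndependent.comp _ Subtype.val_injective
  rw [hspan, finrank_span_eq_card hli]
  refine (Fintype.card_congr (Equiv.subtypeProdEquivProd (p := fun n => nOcc M n = 1)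
    (q := fun s : Fin M → Bool => s ⟨0, hM⟩ = true))).trans ?_
  rw [Fintype.card_prod, card_nOcc_eq_one, card_spin_eq_true]

end Counting

section Witness

variable {M : ℕ} {u v : Bool → ℂ}

lemma chainState_mem_sectorUp (hM : 0 < M) (x : Fin M) :
    chainState u v x ∈ sectorUp M hM 1 :=
  particleAt_mem_sectorUp hM x fun s hs =>
    Finset.prod_eq_zero (Finset.mem_univ ⟨0, hM⟩) (by simp [chainProfile, hs])

lemma chainState_zero_ne_zero (hM : 0 < M) (hv : v ≠ 0) : chainState u v ⟨0, hM⟩ ≠ 0 := by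
  have hprofile : ∀ j, chainProfile u v ⟨0, hM⟩ j ≠ 0 := fun j => by
    by_cases hj : j.1 = 0
    · simp [chainProfile, hj]
    · simpa [chainProfile, hj, Fin.le_def] using hv
  obtain ⟨s, hs⟩ := Function.ne_iff.mp (siteProd_ne_zero hprofile)
  intro h
  have hval := congrFun h (occAt ⟨0, hM⟩, s)
  rw [chainState, particleAt_apply_occAt] at hval
  exact hs hval

lemma chainSpan_le_sectorUp (hM : 0 < M) : chainSpan (M := M) u v ≤ sectorUp M hM 1 :=
  Submodule.span_le.mpr (Set.range_subset_iff.mpr (chainState_mem_sectorUp hM))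

lemma exists_eigenvector_hopLeftSpin_hopRightSpin (γ J : ℝ) :
    ∃ v : Bool → ℂ, v ≠ 0 ∧
      ∃ κ : ℂ, hopLeftSpin γ J (hopRightSpin γ J v) = κ • v := by
  obtain ⟨κ, hκ⟩ := Module.End.exists_eigenvalue (hopLeftSpin γ J * hopRightSpin γ J)
  obtain ⟨v, hv⟩ := hκ.exists_hasEigenvector
  exact ⟨v, hv.2, κ, hv.apply_eq_smul⟩

end Witness

end QuantumBreakdown

/-- for `M = 4Z+3` and uniform couplings `γ ≠ 0`, `J`, there is a
nonzero `Ψ ∈ W₁^↑`, independent of the on-site potential, whose Krylov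
subspace under `H_γ + H_J + H_μ` has dimension at most `M·2^{3Z+1}` for every
on-site potential `μ`; since `dim W₁^↑ = M·2^{4Z+2}`, this Krylov subspace is a
proper subspace of `W₁^↑` for every `μ`: fragmentation of the `Q = 1` sector
survives an arbitrary on-site potential. -/
theorem fragmentation_survives_potential (M Z : ℕ) (hMZ : M = 4 * Z + 3)
    (γ J : ℝ) :
    Module.finrank ℂ ↥(sectorUp M (by omega) 1) = M * 2 ^ (4 * Z + 2) ∧
    ∃ Ψ : V M, Ψ ∈ sectorUp M (by omega) 1 ∧ Ψ ≠ 0 ∧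
      ∀ μ : Fin M → ℝ,
        Module.finrank ℂ
            ↥(Submodule.span ℂ (Set.range fun k : ℕ =>
              ((Hgam M (fun _ => γ) + HJop M (fun _ => J) + Hmu M μ) ^ k) Ψ))
          ≤ M * 2 ^ (3 * Z + 1)
        ∧ Submodule.span ℂ (Set.range fun k : ℕ =>
            ((Hgam M (fun _ => γ) + HJop M (fun _ => J) + Hmu M μ) ^ k) Ψ)
          < sectorUp M (by omega) 1 := by
  have hM : 0 < M := by omega
  have hrank : Module.finrank ℂ (sectorUp M hM 1) = M * 2 ^ (4 * Z + 2) := by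
    rw [finrank_sectorUp_one, show M - 1 = 4 * Z + 2 by omega]
  obtain ⟨v, hv, κ, hκ⟩ := exists_eigenvector_hopLeftSpin_hopRightSpin γ J
  set u := hopRightSpin γ J v
  refine ⟨hrank, chainState u v ⟨0, hM⟩, chainState_mem_sectorUp hM _,
    chainState_zero_ne_zero hM hv, fun μ => ?_⟩
  have hkrylov := span_range_pow_apply_le (hamiltonian_mapsTo_chainSpan rfl hκ μ)
    (chainState_mem_chainSpan ⟨0, hM⟩)
  have hdim : _ ≤ M * 2 ^ (3 * Z + 1) := ((Submodule.finrank_mono hkrylov).trans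
    finrank_chainSpan_le).trans (Nat.le_mul_of_pos_right M (by positivity))
  have hlt : M * 2 ^ (3 * Z + 1) < M * 2 ^ (4 * Z + 2) :=
    Nat.mul_lt_mul_of_pos_left (Nat.pow_lt_pow_right one_lt_two (by omega)) hM
  exact ⟨hdim, Submodule.lt_of_le_of_finrank_lt_finrank
    (hkrylov.trans (chainSpan_le_sectorUp hM)) (hrank ▸ hdim.trans_lt hlt)⟩
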